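/- Let (X, F, μ) be a σ-finite measure space and T : X → X a conservative, measure-preserving transformation. Let (Γ_n)_{n≥0} be a sequence of pairwise disjoint measurable sets with μ(Γ_0) < ∞ and Γ_{n+1} ⊆ T^{-1}(Γ_n) for every n ≥ 0. Then, with equality in [0, ∞], μ( ⋃_{N≥0} Γ_N ) = Σ_{n=0}^∞ (n+1) · μ( T^{-1}(Γ_n) \ Γ_{n+1} ). -/

import Mathlib

/-! With `a n = μ (Γ n)`, measure preservation gives `μ (T⁻¹ Γ n \ Γ (n + 1)) = a n - a (n + 1)`,
and summing `(n + 1) (a n - a (n + 1))` by parts yields `∑ a n = μ (⋃ Γ N)` once `a n → 0`.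
Conservativity enters only there: `Γ n` lies in the set of points first entering `Γ 0` at
time `n`, and (Kac) the measures of these first-entrance sets drop at each step by the measure
of the points of `Γ 0` with return time exactly `n + 1`; by Poincaré recurrence these pieces
exhaust `Γ 0`. -/

open MeasureTheory ENNReal Filter

namespace ENNReal

open Finset in
theorem tsum_tsum_add_eq_tsum_add_one_mul (b : ℕ → ℝ≥0∞) :
    ∑' k, ∑' m, b (m + k) = ∑' n : ℕ, ((n : ℝ≥0∞) + 1) * b n := by
  calc ∑' k, ∑' m, b (m + k) = ∑' p : ℕ × ℕ, b (p.2 + p.1) := ENNReal.tsum_prod.symm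
    _ = ∑' s : Σ n : ℕ, antidiagonal n, b (s.2.1.2 + s.2.1.1) :=
      (HasAntidiagonal.sigmaAntidiagonalEquivProd.tsum_eq (fun p : ℕ × ℕ => b (p.2 + p.1))).symm
    _ = ∑' n : ℕ, ∑' _ : antidiagonal n, b n := by
      rw [ENNReal.tsum_sigma']
      refine tsum_congr fun n => tsum_congr fun p => ?_
      rw [add_comm, mem_antidiagonal.mp p.2]
    _ = ∑' n : ℕ, ((n : ℝ≥0∞) + 1) * b n := by
      simp [tsum_fintype, Nat.card_antidiagonal]

theorem iInf_add_tsum_eq_of_eq_add {f g : ℕ → ℝ≥0∞} (h : ∀ n, f n = f (n + 1) + g n) :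
    (⨅ n, f n) + ∑' n, g n = f 0 := by
  have hpartial : ∀ n, f n + ∑ k ∈ Finset.range n, g k = f 0 := by
    intro n
    induction n with
    | zero => simp
    | succ n ih => rw [Finset.sum_range_succ, ← ih, h n]; ring
  have hanti : Antitone f := antitone_nat_of_succ_le fun n => (h n).symm ▸ le_self_add
  have hlim := (tendsto_atTop_iInf hanti).add (ENNReal.tendsto_nat_tsum g)
  simp only [hpartial] at hlim
  exact tendsto_nhds_unique hlim tendsto_const_nhds

theorem tsum_add_one_mul_sub_eq_tsum {a : ℕ → ℝ≥0∞} (ha : Antitone a)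
    (h : ⨅ n, a n = 0) : ∑' n : ℕ, ((n : ℝ≥0∞) + 1) * (a n - a (n + 1)) = ∑' n, a n := by
  rw [← tsum_tsum_add_eq_tsum_add_one_mul]
  refine tsum_congr fun k => ?_
  have htail : ⨅ m, a (m + k) = 0 :=
    le_zero_iff.mp (h ▸ iInf_mono fun m => ha (Nat.le_add_right m k))
  have := iInf_add_tsum_eq_of_eq_add (f := fun m => a (m + k))
    (g := fun m => a (m + k) - a (m + 1 + k))
    fun m => (add_tsub_cancel_of_le (ha (by omega))).symm
  simpa [htail, Nat.add_right_comm] using this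

end ENNReal

section FirstEntrance

open Function

variable {X : Type*} {T : X → X} {A : Set X}

def firstEntrance (T : X → X) (A : Set X) : ℕ → Set X
  | 0 => A
  | n + 1 => T ⁻¹' firstEntrance T A n \ A

theorem pairwise_disjoint_firstEntrance : Pairwise (Disjoint on firstEntrance T A) := by
  have key : ∀ n k, Disjoint (firstEntrance T A n) (firstEntrance T A (n + k + 1)) := by
    intro n
    induction n with
    | zero => exact fun k => Set.disjoint_sdiff_right
    | succ n ih =>
      intro k
      rw [show n + 1 + k + 1 = n + k + 1 + 1 by omega]
      exact ((ih k).preimage T).mono Set.sdiff_subset Set.sdiff_subset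
  refine (pairwise_disjoint_on _).mpr fun n m hnm => ?_
  obtain ⟨k, rfl⟩ := Nat.exists_eq_add_of_lt hnm
  exact key n k

theorem mem_iUnion_firstEntrance_of_iterate_mem {x : X} {m : ℕ} (h : T^[m] x ∈ A) :
    x ∈ ⋃ n, firstEntrance T A n := by
  induction m generalizing x with
  | zero => exact Set.mem_iUnion.mpr ⟨0, h⟩
  | succ m ih =>
    obtain ⟨k, hk⟩ := Set.mem_iUnion.mp (ih (Function.iterate_succ_apply T m x ▸ h))
    by_cases hx : x ∈ A
    · exact Set.mem_iUnion.mpr ⟨0, hx⟩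
    · exact Set.mem_iUnion.mpr ⟨k + 1, hk, hx⟩

theorem subset_firstEntrance {Γ : ℕ → Set X} (hdisj : Pairwise (Disjoint on Γ))
    (hsub : ∀ n, Γ (n + 1) ⊆ T ⁻¹' Γ n) (n : ℕ) : Γ n ⊆ firstEntrance T (Γ 0) n := by
  induction n with
  | zero => exact subset_rfl
  | succ n ih =>
    exact Set.subset_sdiff.mpr ⟨(hsub n).trans (Set.preimage_mono ih), hdisj n.succ_ne_zero⟩

variable [MeasurableSpace X] {μ : Measure X}

theorem measurableSet_firstEntrance (hT : Measurable T) (hA : MeasurableSet A) (n : ℕ) :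
    MeasurableSet (firstEntrance T A n) := by
  induction n with
  | zero => exact hA
  | succ n ih => exact (hT ih).diff hA

theorem tsum_measure_preimage_firstEntrance_inter (hT : Conservative T μ) (hA : MeasurableSet A) :
    ∑' n, μ (T ⁻¹' firstEntrance T A n ∩ A) = μ A := by
  have hdisj : Pairwise (Disjoint on fun n => T ⁻¹' firstEntrance T A n ∩ A) :=
    pairwise_disjoint_firstEntrance.mono fun _ _ h =>
      (h.preimage T).mono Set.inter_subset_left Set.inter_subset_left
  have hmeas (n : ℕ) : MeasurableSet (T ⁻¹' firstEntrance T A n ∩ A) :=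
    (hT.measurable (measurableSet_firstEntrance hT.measurable hA n)).inter hA
  rw [← measure_iUnion hdisj hmeas]
  refine le_antisymm (measure_mono (Set.iUnion_subset fun n => Set.inter_subset_right)) ?_
  calc μ A = μ (A ∩ {x | ∃ᶠ n in atTop, T^[n] x ∈ A}) :=
        (hT.measure_inter_frequently_image_mem_eq hA.nullMeasurableSet).symm
    _ ≤ _ := measure_mono ?_
  rintro x ⟨hxA, hret⟩
  obtain ⟨m, hm, hmA⟩ := frequently_atTop.mp hret 1
  obtain ⟨m, rfl⟩ := Nat.exists_eq_add_of_le' hm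
  obtain ⟨n, hn⟩ := Set.mem_iUnion.mp
    (mem_iUnion_firstEntrance_of_iterate_mem (Function.iterate_succ_apply T m x ▸ hmA))
  exact Set.mem_iUnion.mpr ⟨n, hn, hxA⟩

theorem iInf_measure_firstEntrance_eq_zero (hcons : Conservative T μ)
    (hpres : MeasurePreserving T μ μ) (hA : MeasurableSet A) (hμA : μ A ≠ ∞) :
    ⨅ n, μ (firstEntrance T A n) = 0 := by
  have hstep : ∀ n, μ (firstEntrance T A n) =
      μ (firstEntrance T A (n + 1)) + μ (T ⁻¹' firstEntrance T A n ∩ A) := fun n => by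
    rw [firstEntrance, measure_sdiff_add_inter _ hA,
      hpres.measure_preimage (measurableSet_firstEntrance hpres.measurable hA n).nullMeasurableSet]
  have := ENNReal.iInf_add_tsum_eq_of_eq_add hstep
  rw [tsum_measure_preimage_firstEntrance_inter hcons hA] at this
  exact (ENNReal.add_left_inj hμA).mp (this.trans (zero_add _).symm)

end FirstEntrance

theorem stmt_13_general {X : Type*} [MeasurableSpace X] (μ : Measure X)
    (T : X → X) (hcons : MeasureTheory.Conservative T μ)
    (hpres : MeasureTheory.MeasurePreserving T μ μ)
    (Γ : ℕ → Set X) (hmeas : ∀ n, MeasurableSet (Γ n))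
    (hdisj : Pairwise (Function.onFun Disjoint Γ))
    (hfin : μ (Γ 0) < ⊤) (hsub : ∀ n : ℕ, Γ (n + 1) ⊆ T ⁻¹' (Γ n)) :
    μ (⋃ N : ℕ, Γ N) = ∑' n : ℕ, ((n : ℝ≥0∞) + 1) * μ (T ⁻¹' (Γ n) \ Γ (n + 1)) := by
  have hanti : Antitone fun n => μ (Γ n) := antitone_nat_of_succ_le fun n =>
    (measure_mono (hsub n)).trans_eq (hpres.measure_preimage (hmeas n).nullMeasurableSet)
  have hdiff : ∀ n, μ (T ⁻¹' Γ n \ Γ (n + 1)) = μ (Γ n) - μ (Γ (n + 1)) := fun n => by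
    rw [measure_sdiff (hsub n) (hmeas _).nullMeasurableSet
      ((hanti (Nat.zero_le _)).trans_lt hfin).ne,
      hpres.measure_preimage (hmeas n).nullMeasurableSet]
  have hinf : ⨅ n, μ (Γ n) = 0 := le_zero_iff.mp <|
    (iInf_mono fun n => measure_mono (subset_firstEntrance hdisj hsub n)).trans_eq
      (iInf_measure_firstEntrance_eq_zero hcons hpres (hmeas 0) hfin.ne)
  simp only [hdiff]
  rw [measure_iUnion hdisj hmeas, ENNReal.tsum_add_one_mul_sub_eq_tsum hanti hinf]

/-- Let `(X,F,μ)` be a σ-finite measure space and `T : X → X` a conservative,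
measure-preserving transformation.  If `(Γ_n)` are pairwise disjoint measurable sets
with `μ(Γ_0) < ∞` and `Γ_{n+1} ⊆ T⁻¹(Γ_n)` for all `n`, then, with equality in
`[0,∞]`, `μ(⋃_N Γ_N) = Σ_{n=0}^∞ (n+1)·μ(T⁻¹(Γ_n) \ Γ_{n+1})`. -/
theorem stmt_13 {X : Type*} [MeasurableSpace X] (μ : Measure X) [SigmaFinite μ]
    (T : X → X) (hcons : MeasureTheory.Conservative T μ)
    (hpres : MeasureTheory.MeasurePreserving T μ μ)
    (Γ : ℕ → Set X) (hmeas : ∀ n, MeasurableSet (Γ n))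
    (hdisj : Pairwise (Function.onFun Disjoint Γ))
    (hfin : μ (Γ 0) < ⊤) (hsub : ∀ n : ℕ, Γ (n + 1) ⊆ T ⁻¹' (Γ n)) :
    μ (⋃ N : ℕ, Γ N) = ∑' n : ℕ, ((n : ℝ≥0∞) + 1) * μ (T ⁻¹' (Γ n) \ Γ (n + 1)) :=
  stmt_13_general μ T hcons hpres Γ hmeas hdisj hfin hsub
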